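/- Let d be a positive integer, let σ be a permutation of {1,…,d}, and let h(σ) denote the number of orbits of σ on {1,…,d} (fixed points count as orbits). If τ₁, …, τᵣ are transpositions in the symmetric group S_d with τ₁⋯τᵣ = σ, and the subgroup of S_d generated by τ₁, …, τᵣ acts transitively on {1,…,d}, then there exists a unique nonnegative integer g such that r = 2g − 2 + d + h(σ). -/

import Mathlib

/-- The number of orbits of a permutation `σ` of `{1, …, d}` (encoded as `Fin d`),
where fixed points count as orbits: the number of orbits of the cyclic group
generated by `σ` acting on `Fin d`. -/
noncomputable def numOrbits {d : ℕ} (σ : Equiv.Perm (Fin d)) : ℕ :=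
  Nat.card (MulAction.orbitRel.Quotient (Subgroup.zpowers σ) (Fin d))

/-!
Write `c(π)` for the number of cycles of `π` and `k(l)` for the number of orbits of the group
generated by the transpositions in `l`. Multiplying `π` by `(a b)` merges the cycles of `a` and `b`
if they differ and splits their common cycle otherwise, so `c` changes by exactly one. Adding
`(a b)` to `l` merges the orbits of `a` and `b`, which can only differ if `a` and `b` lie in
different cycles of the product. By induction on `l`, `r + 2 k(l) - c(τ₁ ⋯ τᵣ) - d` is therefore
a nonnegative even number; transitivity means `k(l) = 1`, and the genus is half of it.
-/

namespace Setoid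

variable {α : Type*} (s : Setoid α) (a b : α)

def mergeClasses : Setoid α where
  r x y := s x y ∨ ((s x a ∨ s x b) ∧ (s y a ∨ s y b))
  iseqv.refl x := .inl (s.refl x)
  iseqv.symm := by
    rintro x y (hxy | ⟨hx, hy⟩)
    exacts [.inl (s.symm hxy), .inr ⟨hy, hx⟩]
  iseqv.trans := by
    rintro x y z (hxy | ⟨hx, hy⟩) (hyz | ⟨hy', hz⟩)
    · exact .inl (s.trans hxy hyz)
    · exact .inr ⟨hy'.imp (s.trans hxy) (s.trans hxy), hz⟩
    · exact .inr ⟨hx, hy.imp (s.trans (s.symm hyz)) (s.trans (s.symm hyz))⟩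
    · exact .inr ⟨hx, hz⟩

variable {s a b}

theorem le_mergeClasses : s ≤ s.mergeClasses a b := fun _ _ => .inl

theorem mergeClasses_rel : s.mergeClasses a b a b :=
  .inr ⟨.inl (s.refl a), .inr (s.refl b)⟩

theorem mergeClasses_le {t : Setoid α} (hst : s ≤ t) (hab : t a b) : s.mergeClasses a b ≤ t := by
  have hta : ∀ {x}, s x a ∨ s x b → t x a := fun hx =>
    hx.elim (fun h => hst h) fun h => t.trans (hst h) (t.symm hab)
  rintro x y (hxy | ⟨hx, hy⟩)
  exacts [hst hxy, t.trans (hta hx) (t.symm (hta hy))]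

theorem mergeClasses_eq_self (h : s a b) : s.mergeClasses a b = s :=
  le_antisymm (mergeClasses_le le_rfl h) le_mergeClasses

theorem card_quotient_mergeClasses_add_one [Finite α] (h : ¬s a b) :
    Nat.card (Quotient (s.mergeClasses a b)) + 1 = Nat.card (Quotient s) := by
  let f : Quotient s → Quotient (s.mergeClasses a b) := Quotient.map id fun _ _ => .inl
  have hinj : Set.InjOn f {⟦a⟧}ᶜ := by
    intro p hp q hq hpq
    induction p using Quotient.inductionOn with | _ x => ?_
    induction q using Quotient.inductionOn with | _ y => ?_
    have hxa : ¬s x a := fun h' => hp (Quotient.sound h')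
    have hya : ¬s y a := fun h' => hq (Quotient.sound h')
    refine Quotient.sound ((Quotient.exact hpq).elim id fun ⟨hx, hy⟩ => ?_)
    exact s.trans (hx.resolve_left hxa) (s.symm (hy.resolve_left hya))
  have himage : f '' {⟦a⟧}ᶜ = Set.univ := by
    refine Set.eq_univ_of_forall fun q => ?_
    induction q using Quotient.inductionOn with | _ y => ?_
    by_cases hya : s y a
    · refine ⟨⟦b⟧, fun hb => h (s.symm (Quotient.exact hb)), Quotient.sound ?_⟩
      exact .inr ⟨.inr (s.refl b), .inl hya⟩
    · exact ⟨⟦y⟧, fun hy => hya (Quotient.exact hy), rfl⟩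
  rw [← Set.ncard_univ, ← himage, hinj.ncard_image, ← Set.ncard_univ,
    ← Set.ncard_sdiff_singleton_add_one (Set.mem_univ ⟦a⟧), Set.compl_eq_univ_sdiff]

theorem mergeClasses_swap_apply [DecidableEq α] (s : Setoid α) (a b x : α) :
    s.mergeClasses a b (Equiv.swap a b x) x := by
  rcases eq_or_ne x a with rfl | hxa
  · simpa using (s.mergeClasses x b).symm mergeClasses_rel
  rcases eq_or_ne x b with rfl | hxb
  · simp [mergeClasses_rel]
  · rw [Equiv.swap_apply_of_ne_of_ne hxa hxb]

theorem card_quotient_of_le_bot [Finite α] (h : s ≤ ⊥) : Nat.card (Quotient s) = Nat.card α :=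
  (Nat.card_eq_of_bijective _ ⟨fun _ _ hxy => h (Quotient.exact hxy), Quotient.mk_surjective⟩).symm

end Setoid

namespace MulAction

variable {G α : Type*} [Group G] [MulAction G α] {S : Set G}

theorem orbitRel_closure_smul_of_mem {g : G} (hg : g ∈ S) (x : α) :
    orbitRel (Subgroup.closure S) α (g • x) x :=
  mem_orbit x (⟨g, Subgroup.subset_closure hg⟩ : Subgroup.closure S)

theorem orbitRel_closure_le {s : Setoid α} (h : ∀ g ∈ S, ∀ x : α, s (g • x) x) :
    orbitRel (Subgroup.closure S) α ≤ s := by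
  have key : ∀ g ∈ Subgroup.closure S, ∀ x : α, s (g • x) x := by
    intro g hg
    induction hg using Subgroup.closure_induction with
    | mem g hg => exact h g hg
    | one => simp
    | mul g k _ _ hg hk => exact fun x => s.trans (by simpa [mul_smul] using hg (k • x)) (hk x)
    | inv g _ hg => exact fun x => s.symm (by simpa using hg (g⁻¹ • x))
  rintro _ _ ⟨⟨g, hg⟩, rfl⟩
  exact key g hg _

end MulAction

open MulAction Subgroup

namespace Equiv.Perm

variable {α : Type*} {π : Perm α} {a b : α}

theorem orbitRel_zpowers (π : Perm α) : orbitRel (zpowers π) α = SameCycle.setoid π := by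
  ext x y
  constructor
  · rintro ⟨⟨_, k, rfl⟩, hk⟩
    exact SameCycle.symm (show SameCycle π y x from ⟨k, hk⟩)
  · intro h
    obtain ⟨k, hk⟩ := SameCycle.symm h
    exact ⟨⟨π ^ k, k, rfl⟩, hk⟩

theorem SameCycle.setoid_le {s : Setoid α} (h : ∀ x, s (π x) x) : SameCycle.setoid π ≤ s := by
  rw [← orbitRel_zpowers, zpowers_eq_closure]
  exact orbitRel_closure_le (by simpa using h)

theorem not_sameCycle_of_pow_apply_eq_self [Finite α] {f : Perm α} {x y : α} {m : ℕ}
    (hm : 0 < m) (hx : (f ^ m) x = x) (hy : ∀ j < m, (f ^ j) x ≠ y) : ¬SameCycle f x y := by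
  intro h
  obtain ⟨n, rfl⟩ := h.exists_nat_pow_eq
  have hper : Function.IsPeriodicPt f m x := by
    rw [Function.IsPeriodicPt, Function.IsFixedPt, ← coe_pow, hx]
  exact hy (n % m) (Nat.mod_lt n hm) (by rw [coe_pow, coe_pow, hper.iterate_mod_apply])

theorem SameCycle.orbitRel_closure {l : List (Perm α)} {x y : α}
    (h : SameCycle l.prod x y) : orbitRel (closure {τ | τ ∈ l}) α x y :=
  have hprod : l.prod ∈ closure {τ | τ ∈ l} := list_prod_mem fun _ hτ => subset_closure hτ
  SameCycle.setoid_le (fun x => mem_orbit x (⟨l.prod, hprod⟩ : closure {τ | τ ∈ l})) h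

variable [DecidableEq α]

/- Up to the first return of `b` to `{a, b}` under `π`, the permutations `π` and `swap a b * π`
move `b` alike; the return point is `a` exactly when `a` lies in the cycle of `b`. -/
theorem exists_first_return_to_pair [Finite α] (π : Perm α) (a b : α) :
    ∃ m, 0 < m ∧ ((π ^ m) b = a ∨ (π ^ m) b = b) ∧
      ∀ j, 0 < j → j < m → (π ^ j) b ≠ a ∧ (π ^ j) b ≠ b := by
  classical
  have hex : ∃ n, 0 < n ∧ ((π ^ n) b = a ∨ (π ^ n) b = b) :=
    ⟨orderOf π, orderOf_pos π, .inr (by rw [pow_orderOf_eq_one, one_apply])⟩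
  refine ⟨Nat.find hex, (Nat.find_spec hex).1, (Nat.find_spec hex).2, fun j hj0 hjm => ?_⟩
  have := Nat.find_min hex hjm
  tauto

theorem swap_mul_pow_apply_of_lt {m : ℕ}
    (hm : ∀ j, 0 < j → j < m → (π ^ j) b ≠ a ∧ (π ^ j) b ≠ b) :
    ∀ j < m, ((swap a b * π) ^ j) b = (π ^ j) b := by
  intro j
  induction j with
  | zero => simp
  | succ j ih =>
    intro hj
    rw [pow_succ', mul_apply, ih (by omega), mul_apply, ← mul_apply π, ← pow_succ']
    exact swap_apply_of_ne_of_ne (hm (j + 1) j.succ_pos hj).1 (hm (j + 1) j.succ_pos hj).2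

theorem swap_mul_pow_apply {m : ℕ} (hm0 : 0 < m)
    (hm : ∀ j, 0 < j → j < m → (π ^ j) b ≠ a ∧ (π ^ j) b ≠ b) :
    ((swap a b * π) ^ m) b = swap a b ((π ^ m) b) := by
  obtain ⟨k, rfl⟩ : ∃ k, m = k + 1 := ⟨m - 1, by omega⟩
  rw [pow_succ', mul_apply, swap_mul_pow_apply_of_lt hm k k.lt_succ_self, mul_apply,
    ← mul_apply π, ← pow_succ']

theorem sameCycle_swap_mul_of_not_sameCycle [Finite α] (h : ¬SameCycle π a b) :
    SameCycle (swap a b * π) a b := by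
  obtain ⟨m, hm0, hret, hfirst⟩ := exists_first_return_to_pair π a b
  have hmb : (π ^ m) b = b :=
    hret.resolve_left fun hma => h (hma ▸ (SameCycle.refl π b).pow_right).symm
  have hba := (SameCycle.refl (swap a b * π) b).pow_right (n := m)
  rw [swap_mul_pow_apply hm0 hfirst, hmb, swap_apply_right] at hba
  exact hba.symm

theorem not_sameCycle_swap_mul_of_sameCycle [Finite α] (hab : a ≠ b) (h : SameCycle π a b) :
    ¬SameCycle (swap a b * π) a b := by
  obtain ⟨m, hm0, hret, hfirst⟩ := exists_first_return_to_pair π a b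
  have hbelow : ∀ j < m, (π ^ j) b ≠ a := by
    rintro (_ | j) hj
    · exact hab.symm
    · exact (hfirst (j + 1) j.succ_pos hj).1
  have hma : (π ^ m) b = a :=
    hret.resolve_right fun hmb => not_sameCycle_of_pow_apply_eq_self hm0 hmb hbelow h.symm
  refine fun h' => not_sameCycle_of_pow_apply_eq_self hm0 ?_ ?_ h'.symm
  · rw [swap_mul_pow_apply hm0 hfirst, hma, swap_apply_left]
  · intro j hj
    rw [swap_mul_pow_apply_of_lt hfirst j hj]
    exact hbelow j hj

theorem SameCycle.setoid_le_mergeClasses_swap_mul (π : Perm α) (a b : α) :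
    SameCycle.setoid π ≤ (SameCycle.setoid (swap a b * π)).mergeClasses a b := by
  refine SameCycle.setoid_le fun x => ?_
  have hx : SameCycle (swap a b * π) x (swap a b (π x)) := (SameCycle.refl _ x).apply_right
  rcases eq_or_ne (π x) a with ha | ha
  · rw [ha, swap_apply_left] at hx
    exact .inr ⟨.inl (ha ▸ SameCycle.refl _ _), .inr hx⟩
  rcases eq_or_ne (π x) b with hb | hb
  · rw [hb, swap_apply_right] at hx
    exact .inr ⟨.inr (hb ▸ SameCycle.refl _ _), .inl hx⟩
  · rw [swap_apply_of_ne_of_ne ha hb] at hx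
    exact .inl hx.symm

theorem SameCycle.setoid_swap_mul_of_not_sameCycle [Finite α] (h : ¬SameCycle π a b) :
    SameCycle.setoid (swap a b * π) = (SameCycle.setoid π).mergeClasses a b := by
  have hab := sameCycle_swap_mul_of_not_sameCycle h
  refine le_antisymm ?_ (Setoid.mergeClasses_le ?_ hab)
  · simpa [swap_mul_self_mul] using SameCycle.setoid_le_mergeClasses_swap_mul (swap a b * π) a b
  · simpa [Setoid.mergeClasses_eq_self (s := SameCycle.setoid (swap a b * π)) hab] using
      SameCycle.setoid_le_mergeClasses_swap_mul π a b

theorem card_quotient_sameCycle_swap_mul_add_one [Finite α] (h : ¬SameCycle π a b) :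
    Nat.card (Quotient (SameCycle.setoid (swap a b * π))) + 1 =
      Nat.card (Quotient (SameCycle.setoid π)) := by
  rw [SameCycle.setoid_swap_mul_of_not_sameCycle h, Setoid.card_quotient_mergeClasses_add_one h]

theorem card_quotient_sameCycle_swap_mul_of_sameCycle [Finite α] (hab : a ≠ b)
    (h : SameCycle π a b) :
    Nat.card (Quotient (SameCycle.setoid (swap a b * π))) =
      Nat.card (Quotient (SameCycle.setoid π)) + 1 := by
  simpa [swap_mul_self_mul] using
    (card_quotient_sameCycle_swap_mul_add_one (not_sameCycle_swap_mul_of_sameCycle hab h)).symm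

theorem orbitRel_closure_insert_swap (S : Set (Perm α)) (a b : α) :
    orbitRel (closure (insert (swap a b) S)) α = (orbitRel (closure S) α).mergeClasses a b := by
  refine le_antisymm (orbitRel_closure_le ?_) (Setoid.mergeClasses_le ?_ ?_)
  · rintro g (rfl | hg) x
    · exact Setoid.mergeClasses_swap_apply _ a b x
    · exact Setoid.le_mergeClasses (orbitRel_closure_smul_of_mem hg x)
  · exact orbitRel_closure_le fun _ hg =>
      orbitRel_closure_smul_of_mem (Set.mem_insert_of_mem _ hg)
  · simpa using orbitRel_closure_smul_of_mem (S := insert (swap a b) S) (Set.mem_insert _ _) b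

theorem exists_length_add_two_mul_card_orbitRel_closure_eq [Finite α] (l : List (Perm α))
    (hl : ∀ τ ∈ l, τ.IsSwap) :
    ∃ n, l.length + 2 * Nat.card (Quotient (orbitRel (closure {τ | τ ∈ l}) α)) =
      Nat.card (Quotient (SameCycle.setoid l.prod)) + Nat.card α + 2 * n := by
  induction l with
  | nil =>
    have hcomp : orbitRel (closure {τ | τ ∈ ([] : List (Perm α))}) α ≤ ⊥ :=
      orbitRel_closure_le (by simp)
    have hcyc : SameCycle.setoid ([] : List (Perm α)).prod ≤ ⊥ := fun _ _ => sameCycle_one.1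
    refine ⟨0, ?_⟩
    rw [Setoid.card_quotient_of_le_bot hcomp, Setoid.card_quotient_of_le_bot hcyc]
    simp only [List.length_nil]
    ring
  | cons τ l ih =>
    obtain ⟨a, b, hab, rfl⟩ := hl τ List.mem_cons_self
    obtain ⟨n, hn⟩ := ih fun τ hτ => hl τ (List.mem_cons_of_mem _ hτ)
    have hset : {τ | τ ∈ swap a b :: l} = insert (swap a b) {τ | τ ∈ l} := by
      ext; simp
    rw [hset, orbitRel_closure_insert_swap, List.prod_cons, List.length_cons]
    by_cases hconn : orbitRel (closure {τ | τ ∈ l}) α a b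
    · rw [Setoid.mergeClasses_eq_self hconn]
      by_cases hcyc : SameCycle l.prod a b
      · refine ⟨n, ?_⟩
        rw [card_quotient_sameCycle_swap_mul_of_sameCycle hab hcyc]
        omega
      · have := card_quotient_sameCycle_swap_mul_add_one hcyc
        exact ⟨n + 1, by omega⟩
    · have hcyc : ¬SameCycle l.prod a b := fun h => hconn h.orbitRel_closure
      have h1 := Setoid.card_quotient_mergeClasses_add_one hconn
      have h2 := card_quotient_sameCycle_swap_mul_add_one hcyc
      exact ⟨n, by omega⟩

end Equiv.Perm

/-- If `τ₁, …, τᵣ` are transpositions in `S_d` with `τ₁ ⋯ τᵣ = σ` which generate a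
subgroup acting transitively on `{1, …, d}`, then there is a unique nonnegative
integer `g` with `r = 2g - 2 + d + h(σ)`. -/
theorem exists_unique_genus_of_transitive_transposition_factorization
    (d : ℕ) (hd : 0 < d) (σ : Equiv.Perm (Fin d))
    (l : List (Equiv.Perm (Fin d)))
    (hswap : ∀ τ ∈ l, τ.IsSwap)
    (hprod : l.prod = σ)
    (htrans : ∀ i j : Fin d, ∃ π ∈ Subgroup.closure {τ | τ ∈ l}, π i = j) :
    ∃! g : ℕ, (l.length : ℤ) = 2 * (g : ℤ) - 2 + d + numOrbits σ := by
  obtain ⟨n, hn⟩ := Equiv.Perm.exists_length_add_two_mul_card_orbitRel_closure_eq l hswap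
  have hpretrans : IsPretransitive (closure {τ | τ ∈ l}) (Fin d) :=
    ⟨fun i j => (htrans i j).elim fun π ⟨hπ, hπij⟩ => ⟨⟨π, hπ⟩, hπij⟩⟩
  have hconn : Nat.card (Quotient (orbitRel (closure {τ | τ ∈ l}) (Fin d))) = 1 :=
    Nat.card_eq_one_iff_unique.2
      ⟨(pretransitive_iff_subsingleton_quotient _ _).1 hpretrans, ⟨⟦⟨0, hd⟩⟧⟩⟩
  have hcyc : Nat.card (Quotient (Equiv.Perm.SameCycle.setoid l.prod)) = numOrbits σ := by
    rw [numOrbits, orbitRel.Quotient, Equiv.Perm.orbitRel_zpowers, hprod]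
  rw [hconn, hcyc, Nat.card_fin] at hn
  exact ⟨n, by omega, fun g hg => by omega⟩
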